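/- Define f : ℝ → ℝ by f(s) = s·((15/8) − (5/4)s + (3/8)s²)². Then f(1) = 1, f'(1) = 0, f''(1) = 0, and the fixed point 1 is attracting with attraction region containing (0, 7/3): for every s₀ ∈ (0, 7/3), the iteration s_{k+1} = f(s_k) converges to 1. -/

import Mathlib

/-!
`f' (s) = (15/8) φ₃ᵗ(s) (s - 1)²` has a double root at `1`, which gives both `f'(1) = 0` and
`f''(1) = 0`. For the attraction region, `64 (f(s) - 1) = (s - 1)³ (9s² - 33s + 64)` and
`64 (f(s) - s) = s (s - 1)(3s - 7)(3s² - 10s + 23)` with both quadratics positive, so on `(0, 1)`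
the iteration increases and stays below `1`, while on `(1, 7/3)` it decreases and stays above `1`.
A monotone bounded orbit of a continuous map converges to a fixed point, which can only be `1`.
-/

/-- The spectral map of the cubically convergent tight-window iteration III
with initial scaling: `f(s) = s·(φ₃ᵗ(s))²` with `φ₃ᵗ(s) = 15/8 − (5/4)s + (3/8)s²`. -/
noncomputable def f4 (s : ℝ) : ℝ := s * ((15/8) - (5/4) * s + (3/8) * s ^ 2) ^ 2

open Set Filter Topology Function

section Iteration

variable {α : Type*} [ConditionallyCompleteLinearOrder α] [TopologicalSpace α] [OrderTopology α]
  {f : α → α} {a b c : α}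

theorem tendsto_iterate_nhds_of_self_lt_apply (hf : Continuous f)
    (h : ∀ x ∈ Ioo a c, x < f x ∧ f x < c) {x : α} (hx : x ∈ Ioo a c) :
    Tendsto (fun n => f^[n] x) atTop (𝓝 c) := by
  have hmem : ∀ n, f^[n] x ∈ Ioo a c := by
    intro n
    induction n with
    | zero => exact hx
    | succ n ih =>
      rw [iterate_succ_apply']
      exact ⟨ih.1.trans (h _ ih).1, (h _ ih).2⟩
  have hmono : Monotone fun n => f^[n] x :=
    monotone_nat_of_le_succ fun n => by
      rw [iterate_succ_apply']
      exact (h _ (hmem n)).1.le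
  have hbdd : BddAbove (range fun n => f^[n] x) := ⟨c, forall_mem_range.2 fun n => (hmem n).2.le⟩
  have hlim := tendsto_atTop_ciSup hmono hbdd
  set L := ⨆ n, f^[n] x
  have hxL : x ≤ L := le_ciSup hbdd 0
  have hfix : IsFixedPt f L := isFixedPt_of_tendsto_iterate hlim hf.continuousAt
  obtain rfl | hLc := (ciSup_le fun n => (hmem n).2.le : L ≤ c).eq_or_lt
  · exact hlim
  · exact absurd hfix (h L ⟨hx.1.trans_le hxL, hLc⟩).1.ne'

theorem tendsto_iterate_nhds_of_apply_lt_self (hf : Continuous f)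
    (h : ∀ x ∈ Ioo c b, c < f x ∧ f x < x) {x : α} (hx : x ∈ Ioo c b) :
    Tendsto (fun n => f^[n] x) atTop (𝓝 c) :=
  tendsto_iterate_nhds_of_self_lt_apply (α := αᵒᵈ) (a := OrderDual.toDual b) hf
    (fun y hy => (h y ⟨hy.2, hy.1⟩).symm) (x := x) ⟨hx.2, hx.1⟩

theorem tendsto_iterate_nhds_of_attracting (hf : Continuous f) (hc : f c = c)
    (hlt : ∀ x ∈ Ioo a c, x < f x ∧ f x < c) (hgt : ∀ x ∈ Ioo c b, c < f x ∧ f x < x)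
    {x : α} (hx : x ∈ Ioo a b) : Tendsto (fun n => f^[n] x) atTop (𝓝 c) := by
  rcases lt_trichotomy x c with hxc | rfl | hxc
  · exact tendsto_iterate_nhds_of_self_lt_apply hf hlt ⟨hx.1, hxc⟩
  · simp only [iterate_fixed hc, tendsto_const_nhds]
  · exact tendsto_iterate_nhds_of_apply_lt_self hf hgt ⟨hxc, hx.2⟩

end Iteration

theorem hasDerivAt_mul_sub_sq_zero {𝕜 : Type*} [NontriviallyNormedField 𝕜] {g : 𝕜 → 𝕜} {x : 𝕜}
    (hg : DifferentiableAt 𝕜 g x) : HasDerivAt (fun s => g s * (s - x) ^ 2) 0 x :=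
  (hg.hasDerivAt.mul (((hasDerivAt_id x).sub_const x).pow 2)).congr_deriv (by simp)

theorem hasDerivAt_f4 (s : ℝ) :
    HasDerivAt f4 (15/8 * ((15/8) - (5/4) * s + (3/8) * s ^ 2) * (s - 1) ^ 2) s := by
  have hφ : HasDerivAt (fun s : ℝ => (15/8) - (5/4) * s + (3/8) * s ^ 2)
      (-(5/4) + (3/8) * (2 * s)) s :=
    (((hasDerivAt_id s).const_mul (5/4 : ℝ)).const_sub (15/8 : ℝ) |>.add
      ((hasDerivAt_pow 2 s).const_mul (3/8 : ℝ))).congr_deriv (by simp)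
  exact ((hasDerivAt_id s).mul (hφ.pow 2)).congr_deriv (by simp; ring)

theorem deriv_f4 :
    deriv f4 = fun s => 15/8 * ((15/8) - (5/4) * s + (3/8) * s ^ 2) * (s - 1) ^ 2 :=
  funext fun s => (hasDerivAt_f4 s).deriv

theorem continuous_f4 : Continuous f4 := by
  unfold f4
  fun_prop

theorem f4_sub_one (s : ℝ) : f4 s - 1 = (s - 1) ^ 3 * (9 * s ^ 2 - 33 * s + 64) / 64 := by
  unfold f4
  ring

theorem f4_sub_self (s : ℝ) :
    f4 s - s = s * (s - 1) * (3 * s - 7) * (3 * s ^ 2 - 10 * s + 23) / 64 := by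
  unfold f4
  ring

theorem self_lt_f4_and_f4_lt_one {s : ℝ} (hs : s ∈ Ioo (0 : ℝ) 1) : s < f4 s ∧ f4 s < 1 := by
  obtain ⟨h0, h1⟩ := hs
  have hq : 0 < 3 * s ^ 2 - 10 * s + 23 := by nlinarith [sq_nonneg (s - 5/3)]
  have hr : 0 < 9 * s ^ 2 - 33 * s + 64 := by nlinarith [sq_nonneg (s - 11/6)]
  have hcubic : 0 < s * (s - 1) * (3 * s - 7) := by nlinarith [mul_pos h0 (sub_pos.2 h1)]
  constructor
  · nlinarith [f4_sub_self s, mul_pos hcubic hq]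
  · nlinarith [f4_sub_one s, mul_pos (pow_pos (sub_pos.2 h1) 3) hr]

theorem one_lt_f4_and_f4_lt_self {s : ℝ} (hs : s ∈ Ioo (1 : ℝ) (7/3)) : 1 < f4 s ∧ f4 s < s := by
  obtain ⟨h1, h7⟩ := hs
  have hq : 0 < 3 * s ^ 2 - 10 * s + 23 := by nlinarith [sq_nonneg (s - 5/3)]
  have hr : 0 < 9 * s ^ 2 - 33 * s + 64 := by nlinarith [sq_nonneg (s - 11/6)]
  have hcubic : s * (s - 1) * (3 * s - 7) < 0 := by
    nlinarith [mul_pos (mul_pos (zero_lt_one.trans h1) (sub_pos.2 h1)) (sub_pos.2 h7)]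
  constructor
  · nlinarith [f4_sub_one s, mul_pos (pow_pos (sub_pos.2 h1) 3) hr]
  · nlinarith [f4_sub_self s, mul_neg_of_neg_of_pos hcubic hq]

theorem stmt4 :
    f4 1 = 1 ∧ deriv f4 1 = 0 ∧ deriv (deriv f4) 1 = 0 ∧
    (∀ s₀ ∈ Set.Ioo (0 : ℝ) (7/3),
      Filter.Tendsto (fun k => f4^[k] s₀) Filter.atTop (nhds 1)) := by
  have hfix : f4 1 = 1 := by norm_num [f4]
  refine ⟨hfix, by simp [deriv_f4], ?_, fun s₀ hs₀ => ?_⟩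
  · rw [deriv_f4]
    exact (hasDerivAt_mul_sub_sq_zero (by fun_prop)).deriv
  · exact tendsto_iterate_nhds_of_attracting continuous_f4 hfix
      (fun s hs => self_lt_f4_and_f4_lt_one hs) (fun s hs => one_lt_f4_and_f4_lt_self hs) hs₀
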